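/- Let (V,C,u) be an order unit space with a strictly convex cone, g : C° → C° a bijective antihomogeneous order-antimorphism, and x ∈ C°. Define G_x : V → V by G_x(z) = −lim_{t→0} (g(x+tz) − g(x))/t (the limit exists in ‖·‖_u). Then G_x is a bijection of V onto V satisfying G_x(λz) = λ G_x(z) for all λ ∈ ℝ and z ∈ V, and for all w, z ∈ V one has w ≤_C z if and only if G_x(w) ≤_C G_x(z); moreover the inverse of G_x is the map w ↦ −lim_{t→0} (g⁻¹(g(x)+tw) − g⁻¹(g(x)))/t. -/

import Mathlib

/-!
Write `-G z` for the line derivative of `g` at `x` in direction `z`. Homogeneity of `G` is that of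
line derivatives, and monotonicity passes from `g` to `G` in the limit because `C` is closed.

The heart of the argument is that an antihomogeneous order-antimorphism `f` of `C°` is locally
Lipschitz: if `a ≥ δ u` and `‖b - a‖ ≤ s δ` with `s ≤ 1/2`, then `(1 - s) a ≤ b ≤ (1 + s) a`, hence
`(1 + s)⁻¹ f a ≤ f b ≤ (1 - s)⁻¹ f a` and `‖f b - f a‖ ≤ 2 s ‖f a‖ ≤ 2 s δ⁻¹ ‖f u‖`. Applied to
`f = g⁻¹` at `g x + t w` and `g (x + t z)`, this turns the line derivative `w` of `g` at `x` in
direction `z` into the line derivative `z` of `g⁻¹` at `g x` in direction `w`; with the symmetric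
statement for `g⁻¹` this makes `G'` the inverse of `G`.
-/

open Set Filter Topology

variable {V : Type*} [NormedAddCommGroup V] [NormedSpace ℝ V]

/-- `(V, C, u)` is an order unit space whose norm is the order unit norm of `(C, u)`:
`C` is an Archimedean cone and `u` is an order unit of it. -/
structure IsOrderUnitSpace (C : Set V) (u : V) : Prop where
  convex : Convex ℝ C
  smul_mem : ∀ l : ℝ, 0 ≤ l → ∀ x ∈ C, l • x ∈ C
  salient : C ∩ (-C) = {0}
  archimedean : ∀ x : V, ∀ y ∈ C, (∀ n : ℕ, 0 < n → y - (n : ℝ) • x ∈ C) → -x ∈ C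
  unit_mem : u ∈ C
  order_unit : ∀ x : V, ∃ l : ℝ, 0 ≤ l ∧ l • u - x ∈ C
  norm_eq : ∀ x : V, ‖x‖ = sInf {l : ℝ | 0 < l ∧ x + l • u ∈ C ∧ l • u - x ∈ C}

/-- `M(x/y) = inf {β > 0 : x ≤_C β y}`. -/
noncomputable def Mratio (C : Set V) (x y : V) : ℝ :=
  sInf {b : ℝ | 0 < b ∧ b • y - x ∈ C}

/-- The cone `C` is strictly convex: the open segment between any two linearly
independent boundary points lies in the interior. -/
def StrictlyConvexCone (C : Set V) : Prop :=
  ∀ x ∈ frontier C, ∀ y ∈ frontier C, LinearIndependent ℝ ![x, y] →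
    openSegment ℝ x y ⊆ interior C

/-- `g` is antihomogeneous on the interior of `C`: `g (λ x) = λ⁻¹ g x`. -/
def IsAntihomogeneous (C : Set V) (g : V → V) : Prop :=
  ∀ l : ℝ, 0 < l → ∀ x ∈ interior C, g (l • x) = l⁻¹ • g x

/-- `g` is an order-antimorphism of the interior of `C`: `x ≤_C y ↔ g y ≤_C g x`. -/
def IsOrderAntimorphism (C : Set V) (g : V → V) : Prop :=
  ∀ x ∈ interior C, ∀ y ∈ interior C, (y - x ∈ C ↔ g x - g y ∈ C)

/-- A state of `(V, C, u)`: a positive linear functional with `φ u = 1`. -/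
def IsState (C : Set V) (u : V) (φ : V →ₗ[ℝ] ℝ) : Prop :=
  (∀ x ∈ C, 0 ≤ φ x) ∧ φ u = 1

namespace IsOrderUnitSpace

variable {C : Set V} {u : V}

theorem add_mem (h : IsOrderUnitSpace C u) {a b : V} (ha : a ∈ C) (hb : b ∈ C) : a + b ∈ C := by
  have hmid := h.convex ha hb (by norm_num : (0:ℝ) ≤ 1/2) (by norm_num : (0:ℝ) ≤ 1/2) (by norm_num)
  convert h.smul_mem 2 (by norm_num) _ hmid using 1
  module

theorem smul_sub_smul_mem (h : IsOrderUnitSpace C u) {p : V} (hp : p ∈ C) {α β : ℝ}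
    (hαβ : α ≤ β) : β • p - α • p ∈ C := by
  rw [← sub_smul]
  exact h.smul_mem _ (sub_nonneg.2 hαβ) p hp

theorem norm_le (h : IsOrderUnitSpace C u) {v : V} {l : ℝ} (hl : 0 ≤ l) (h₁ : v + l • u ∈ C)
    (h₂ : l • u - v ∈ C) : ‖v‖ ≤ l := by
  rw [h.norm_eq]
  refine le_of_forall_pos_le_add fun ε hε => csInf_le ⟨0, fun b hb => hb.1.le⟩ ⟨by linarith, ?_, ?_⟩
  · convert h.add_mem h₁ (h.smul_mem ε hε.le u h.unit_mem) using 1; module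
  · convert h.add_mem h₂ (h.smul_mem ε hε.le u h.unit_mem) using 1; module

theorem mem_of_norm_lt (h : IsOrderUnitSpace C u) {v : V} {l : ℝ} (hvl : ‖v‖ < l) :
    v + l • u ∈ C ∧ l • u - v ∈ C := by
  have hne : {l : ℝ | 0 < l ∧ v + l • u ∈ C ∧ l • u - v ∈ C}.Nonempty := by
    obtain ⟨l₁, hl₁, h₁⟩ := h.order_unit v
    obtain ⟨l₂, hl₂, h₂⟩ := h.order_unit (-v)
    refine ⟨l₁ + l₂ + 1, by positivity, ?_, ?_⟩
    · convert h.add_mem h₂ (h.smul_mem (l₁ + 1) (by linarith) u h.unit_mem) using 1; module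
    · convert h.add_mem h₁ (h.smul_mem (l₂ + 1) (by linarith) u h.unit_mem) using 1; module
  rw [h.norm_eq] at hvl
  obtain ⟨s, ⟨-, hs₁, hs₂⟩, hsl⟩ := exists_lt_of_csInf_lt hne hvl
  have hrest := h.smul_mem (l - s) (by linarith) u h.unit_mem
  constructor
  · convert h.add_mem hs₁ hrest using 1; module
  · convert h.add_mem hs₂ hrest using 1; module

theorem isClosed (h : IsOrderUnitSpace C u) : IsClosed C := by
  refine isClosed_of_closure_subset fun y hy => ?_
  have hnear : ∀ ε : ℝ, 0 < ε → y + ε • u ∈ C := by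
    intro ε hε
    obtain ⟨c, hc, hyc⟩ := Metric.mem_closure_iff.mp hy ε hε
    rw [dist_eq_norm] at hyc
    convert h.add_mem (h.mem_of_norm_lt hyc).1 hc using 1
    abel
  simpa using h.archimedean (-y) u h.unit_mem fun n hn => by
    have hn' : (n : ℝ) ≠ 0 := by positivity
    convert h.smul_mem n (by positivity) _ (hnear (n : ℝ)⁻¹ (by positivity)) using 1
    rw [smul_add, smul_smul, mul_inv_cancel₀ hn']
    module

theorem norm_smul_sub_mem (h : IsOrderUnitSpace C u) (v : V) : ‖v‖ • u - v ∈ C := by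
  have hlim : Tendsto (fun l : ℝ => l • u - v) (𝓝[>] ‖v‖) (𝓝 (‖v‖ • u - v)) :=
    ((continuous_id.smul continuous_const).sub continuous_const).continuousAt.tendsto.mono_left
      nhdsWithin_le_nhds
  exact h.isClosed.mem_of_tendsto hlim
    (eventually_nhdsWithin_of_forall fun l hl => (h.mem_of_norm_lt hl).2)

theorem norm_le_norm (h : IsOrderUnitSpace C u) {p v : V} (h₁ : p + v ∈ C) (h₂ : p - v ∈ C) :
    ‖v‖ ≤ ‖p‖ := by
  have hp := h.norm_smul_sub_mem p
  refine h.norm_le (norm_nonneg p) ?_ ?_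
  · convert h.add_mem h₁ hp using 1; abel
  · convert h.add_mem h₂ hp using 1; abel

theorem unit_mem_interior (h : IsOrderUnitSpace C u) : u ∈ interior C := by
  refine mem_interior.2
    ⟨Metric.ball u 1, fun v hv => ?_, Metric.isOpen_ball, Metric.mem_ball_self one_pos⟩
  rw [Metric.mem_ball, dist_eq_norm] at hv
  simpa using (h.mem_of_norm_lt hv).1

theorem smul_mem_interior (h : IsOrderUnitSpace C u) {a : V} {l : ℝ} (hl : 0 < l)
    (ha : a ∈ interior C) : l • a ∈ interior C := by
  refine interior_maximal ?_ (isOpen_interior.smul₀ hl.ne') (smul_mem_smul_set ha)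
  rintro _ ⟨b, hb, rfl⟩
  exact h.smul_mem l hl.le b (interior_subset hb)

theorem sandwich_of_norm_sub_le (h : IsOrderUnitSpace C u) {a b : V} {δ s : ℝ}
    (haδ : a - δ • u ∈ C) (hs : 0 ≤ s) (hab : ‖b - a‖ ≤ s * δ) :
    b - (1 - s) • a ∈ C ∧ (1 + s) • a - b ∈ C := by
  have hgap := h.smul_mem s hs _ haδ
  have hslack := h.smul_sub_smul_mem h.unit_mem hab
  constructor
  · have hba := h.norm_smul_sub_mem (a - b)
    rw [norm_sub_rev] at hba
    convert h.add_mem (h.add_mem hba hslack) hgap using 1; module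
  · convert h.add_mem (h.add_mem (h.norm_smul_sub_mem (b - a)) hslack) hgap using 1; module

end IsOrderUnitSpace

theorem eventually_add_smul_mem_interior {S : Set V} {p : V} (hp : p ∈ interior S) (v : V) :
    ∀ᶠ t : ℝ in 𝓝 0, p + t • v ∈ interior S :=
  ((continuous_const.add (continuous_id.smul continuous_const)).tendsto' 0 p (by simp)).eventually
    (isOpen_interior.mem_nhds hp)

theorem exists_pos_sub_smul_mem_interior {S : Set V} {p : V} (hp : p ∈ interior S) (v : V) :
    ∃ δ > (0 : ℝ), p - δ • v ∈ interior S := by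
  obtain ⟨δ, hδ, hδ₀⟩ := (((eventually_add_smul_mem_interior hp (-v)).filter_mono
    nhdsWithin_le_nhds).and (self_mem_nhdsWithin (s := Ioi (0:ℝ)))).exists
  exact ⟨δ, hδ₀, by simpa [sub_eq_add_neg] using hδ⟩

section Antimorphism

variable {C : Set V} {u : V} {f g : V → V}

omit [NormedSpace ℝ V] in
theorem IsOrderAntimorphism.of_rightInvOn (hmor : IsOrderAntimorphism C g)
    (hf : MapsTo f (interior C) (interior C)) (hinv : RightInvOn f g (interior C)) :
    IsOrderAntimorphism C f := fun a ha b hb => by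
  have hab := hmor (f b) (hf hb) (f a) (hf ha)
  rw [hinv ha, hinv hb] at hab
  exact hab.symm

theorem IsAntihomogeneous.of_invOn (h : IsOrderUnitSpace C u) (hanti : IsAntihomogeneous C g)
    (hf : MapsTo f (interior C) (interior C)) (hinv : InvOn f g (interior C) (interior C)) :
    IsAntihomogeneous C f := fun l hl a ha => by
  have hmem : l⁻¹ • f a ∈ interior C := h.smul_mem_interior (inv_pos.2 hl) (hf ha)
  calc f (l • a) = f (g (l⁻¹ • f a)) := by
        rw [hanti _ (inv_pos.2 hl) _ (hf ha), inv_inv, hinv.2 ha]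
    _ = l⁻¹ • f a := hinv.1 hmem

theorem IsOrderAntimorphism.norm_sub_le_of_sandwich (h : IsOrderUnitSpace C u)
    (hmaps : MapsTo f (interior C) (interior C)) (hmor : IsOrderAntimorphism C f)
    (hanti : IsAntihomogeneous C f) {a b : V} (ha : a ∈ interior C) (hb : b ∈ interior C)
    {s : ℝ} (hs₀ : 0 ≤ s) (hs₁ : s ≤ 1 / 2)
    (hlo : b - (1 - s) • a ∈ C) (hhi : (1 + s) • a - b ∈ C) :
    ‖f b - f a‖ ≤ 2 * s * ‖f a‖ := by
  have hfa : f a ∈ C := interior_subset (hmaps ha)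
  have hfhi : f b - (1 + s)⁻¹ • f a ∈ C := by
    rw [← hanti _ (by linarith) a ha]
    exact (hmor b hb _ (h.smul_mem_interior (by linarith) ha)).1 hhi
  have hflo : (1 - s)⁻¹ • f a - f b ∈ C := by
    rw [← hanti _ (by linarith) a ha]
    exact (hmor _ (h.smul_mem_interior (by linarith) ha) b hb).1 hlo
  have hinv_add : 1 - 2 * s ≤ (1 + s)⁻¹ := by
    rw [← one_div, le_div_iff₀ (by linarith)]; nlinarith
  have hinv_sub : (1 - s)⁻¹ ≤ 1 + 2 * s := by
    rw [← one_div, div_le_iff₀ (by linarith)]; nlinarith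
  calc ‖f b - f a‖ ≤ ‖(2 * s) • f a‖ := by
        refine h.norm_le_norm ?_ ?_
        · convert h.add_mem hfhi (h.smul_sub_smul_mem hfa hinv_add) using 1; module
        · convert h.add_mem hflo (h.smul_sub_smul_mem hfa hinv_sub) using 1; module
    _ = 2 * s * ‖f a‖ := by rw [norm_smul, Real.norm_of_nonneg (by linarith)]

theorem IsOrderAntimorphism.norm_le_of_sub_smul_mem (h : IsOrderUnitSpace C u)
    (hmaps : MapsTo f (interior C) (interior C)) (hmor : IsOrderAntimorphism C f)
    (hanti : IsAntihomogeneous C f) {a : V} (ha : a ∈ interior C) {δ : ℝ} (hδ : 0 < δ)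
    (haδ : a - δ • u ∈ C) : ‖f a‖ ≤ δ⁻¹ * ‖f u‖ := by
  have hfu : δ⁻¹ • f u - f a ∈ C := by
    rw [← hanti δ hδ u h.unit_mem_interior]
    exact (hmor _ (h.smul_mem_interior hδ h.unit_mem_interior) a ha).1 haδ
  calc ‖f a‖ ≤ ‖δ⁻¹ • f u‖ := h.norm_le_norm (h.add_mem (h.smul_mem _ (by positivity) _
          (interior_subset (hmaps h.unit_mem_interior))) (interior_subset (hmaps ha))) hfu
    _ = δ⁻¹ * ‖f u‖ := by rw [norm_smul, Real.norm_of_nonneg (by positivity)]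

theorem IsOrderAntimorphism.norm_sub_le (h : IsOrderUnitSpace C u)
    (hmaps : MapsTo f (interior C) (interior C)) (hmor : IsOrderAntimorphism C f)
    (hanti : IsAntihomogeneous C f) {a b : V} (ha : a ∈ interior C) (hb : b ∈ interior C)
    {δ : ℝ} (hδ : 0 < δ) (haδ : a - δ • u ∈ C) (hab : ‖b - a‖ ≤ δ / 2) :
    ‖f b - f a‖ ≤ 2 * (δ⁻¹) ^ 2 * ‖f u‖ * ‖b - a‖ := by
  have hsδ : ‖b - a‖ = ‖b - a‖ / δ * δ := by field_simp
  obtain ⟨hlo, hhi⟩ := h.sandwich_of_norm_sub_le haδ (by positivity) hsδ.le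
  calc ‖f b - f a‖ ≤ 2 * (‖b - a‖ / δ) * ‖f a‖ :=
        hmor.norm_sub_le_of_sandwich h hmaps hanti ha hb (by positivity)
          (by rw [div_le_iff₀ hδ]; linarith) hlo hhi
    _ ≤ 2 * (‖b - a‖ / δ) * (δ⁻¹ * ‖f u‖) := by
        gcongr; exact hmor.norm_le_of_sub_smul_mem h hmaps hanti ha hδ haδ
    _ = 2 * (δ⁻¹) ^ 2 * ‖f u‖ * ‖b - a‖ := by ring

theorem IsOrderAntimorphism.sub_mem_of_hasLineDerivAt (h : IsOrderUnitSpace C u)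
    (hmor : IsOrderAntimorphism C g) {x z₁ z₂ w₁ w₂ : V} (hx : x ∈ interior C)
    (h₁ : HasLineDerivAt ℝ g w₁ x z₁) (h₂ : HasLineDerivAt ℝ g w₂ x z₂) (hz : z₂ - z₁ ∈ C) :
    w₁ - w₂ ∈ C := by
  refine h.isClosed.mem_of_tendsto (h₁.tendsto_slope_zero_right.sub h₂.tendsto_slope_zero_right) ?_
  filter_upwards [(eventually_add_smul_mem_interior hx z₁).filter_mono nhdsWithin_le_nhds,
    (eventually_add_smul_mem_interior hx z₂).filter_mono nhdsWithin_le_nhds,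
    self_mem_nhdsWithin] with t ht₁ ht₂ (ht : 0 < t)
  have hstep : (x + t • z₂) - (x + t • z₁) ∈ C := by
    convert h.smul_mem t ht.le _ hz using 1; module
  convert h.smul_mem t⁻¹ (by positivity) _ ((hmor _ ht₁ _ ht₂).1 hstep) using 1
  module

/-- No differentiability of `f` is assumed: the local Lipschitz bound
`IsOrderAntimorphism.norm_sub_le` at the points `g x + t • w` and `g (x + t • z)`, which are
`o(t)` apart, provides it. -/
theorem HasLineDerivAt.of_leftInvOn_antimorphism (h : IsOrderUnitSpace C u)
    (hg : MapsTo g (interior C) (interior C)) (hf : MapsTo f (interior C) (interior C))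
    (hmor : IsOrderAntimorphism C f) (hanti : IsAntihomogeneous C f)
    (hleft : LeftInvOn f g (interior C)) {x z w : V} (hx : x ∈ interior C)
    (hD : HasLineDerivAt ℝ g w x z) : HasLineDerivAt ℝ f z (g x) w := by
  rw [hasLineDerivAt_iff_tendsto_slope_zero] at hD ⊢
  simp only [hleft hx]
  set y := g x
  obtain ⟨δ, hδ, hyδ⟩ := exists_pos_sub_smul_mem_interior (hg hx) u
  set K := 2 * (δ⁻¹) ^ 2 * ‖f u‖
  set ρ := fun t : ℝ => ‖t⁻¹ • (g (x + t • z) - y) - w‖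
  have hρ : Tendsto ρ (𝓝[≠] 0) (𝓝 0) := tendsto_iff_norm_sub_tendsto_zero.1 hD
  have hrem : ∀ t : ℝ, t ≠ 0 → ‖g (x + t • z) - (y + t • w)‖ = |t| * ρ t := fun t ht => by
    rw [← Real.norm_eq_abs, ← norm_smul, smul_sub, smul_inv_smul₀ ht]
    congr 1; abel
  have hsmall : Tendsto (fun t : ℝ => |t| * ρ t) (𝓝[≠] 0) (𝓝 0) := by
    simpa using (continuous_abs.tendsto' 0 0 abs_zero).mono_left nhdsWithin_le_nhds |>.mul hρ
  have hbound : ∀ᶠ t in 𝓝[≠] (0 : ℝ), ‖t⁻¹ • (f (y + t • w) - x) - z‖ ≤ K * ρ t := by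
    filter_upwards [(eventually_add_smul_mem_interior hx z).filter_mono nhdsWithin_le_nhds,
      (eventually_add_smul_mem_interior (hg hx) w).filter_mono nhdsWithin_le_nhds,
      (eventually_add_smul_mem_interior hyδ w).filter_mono nhdsWithin_le_nhds,
      hsmall.eventually (eventually_le_nhds (half_pos hδ)), self_mem_nhdsWithin]
      with t hxt hyt hyδt hsmallt (ht : t ≠ 0)
    have hest := hmor.norm_sub_le h hf hanti hyt (hg hxt) hδ
      (by convert interior_subset hyδt using 1; abel) ((hrem t ht).trans_le hsmallt)
    rw [hleft hxt, hrem t ht] at hest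
    have hid : t⁻¹ • (f (y + t • w) - x) - z = t⁻¹ • -(x + t • z - f (y + t • w)) := by
      simp only [smul_neg, smul_sub, smul_add, inv_smul_smul₀ ht]; abel
    rw [hid, norm_smul, norm_neg, norm_inv, Real.norm_eq_abs]
    calc |t|⁻¹ * ‖x + t • z - f (y + t • w)‖ ≤ |t|⁻¹ * (K * (|t| * ρ t)) := by gcongr
      _ = K * ρ t := by field_simp
  refine tendsto_iff_norm_sub_tendsto_zero.2
    (squeeze_zero' (Eventually.of_forall fun _ => norm_nonneg _) hbound ?_)
  simpa using hρ.const_mul K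

end Antimorphism

theorem map_smul_of_hasLineDerivAt {W : Type*} [NormedAddCommGroup W] [NormedSpace ℝ W]
    {g : V → W} {x : V} {G : V → W} (hD : ∀ z, HasLineDerivAt ℝ g (-G z) x z) (l : ℝ) (z : V) :
    G (l • z) = l • G z := by
  simpa using (hD (l • z)).unique ((hD z).smul l)

theorem G_bijective_homogeneous_orderIsomorphism_general
    (C : Set V) (u : V) (hous : IsOrderUnitSpace C u)
    (g g' : V → V) (hbij : Set.BijOn g (interior C) (interior C))
    (hanti : IsAntihomogeneous C g) (hmor : IsOrderAntimorphism C g)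
    (hinv : Set.InvOn g' g (interior C) (interior C))
    (x : V) (hx : x ∈ interior C)
    (G G' : V → V)
    (hG : ∀ z : V, Tendsto (fun t : ℝ => t⁻¹ • (g (x + t • z) - g x))
      (𝓝[≠] (0:ℝ)) (𝓝 (-(G z))))
    (hG' : ∀ w : V, Tendsto (fun t : ℝ => t⁻¹ • (g' (g x + t • w) - g' (g x)))
      (𝓝[≠] (0:ℝ)) (𝓝 (-(G' w)))) :
    Function.Bijective G ∧
    (∀ l : ℝ, ∀ z : V, G (l • z) = l • G z) ∧
    (∀ w z : V, (z - w ∈ C ↔ G z - G w ∈ C)) ∧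
    Function.LeftInverse G' G ∧ Function.RightInverse G' G := by
  have hg' : MapsTo g' (interior C) (interior C) := (hbij.symm hinv.symm).mapsTo
  have hmor' := hmor.of_rightInvOn hg' hinv.2
  have hanti' := hanti.of_invOn hous hg' hinv
  have hD z : HasLineDerivAt ℝ g (-G z) x z := hasLineDerivAt_iff_tendsto_slope_zero.2 (hG z)
  have hD' w : HasLineDerivAt ℝ g' (-G' w) (g x) w :=
    hasLineDerivAt_iff_tendsto_slope_zero.2 (hG' w)
  have hneg v : G (-v) = -G v := by simpa using map_smul_of_hasLineDerivAt hD (-1) v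
  have hneg' v : G' (-v) = -G' v := by simpa using map_smul_of_hasLineDerivAt hD' (-1) v
  have hleft : Function.LeftInverse G' G := fun z => by
    have hz := (hD' (-G z)).unique
      ((hD z).of_leftInvOn_antimorphism hous hbij.mapsTo hg' hmor' hanti' hinv.1 hx)
    rwa [hneg', neg_neg] at hz
  have hright : Function.RightInverse G' G := fun w => by
    have hw := (hD (-G' w)).unique (by simpa [hinv.1 hx] using
      (hD' w).of_leftInvOn_antimorphism hous hg' hbij.mapsTo hmor hanti hinv.2 (hbij.mapsTo hx))
    rwa [hneg, neg_neg] at hw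
  refine ⟨⟨hleft.injective, hright.surjective⟩, map_smul_of_hasLineDerivAt hD,
    fun w z => ⟨fun hwz => ?_, fun hGwz => ?_⟩, hleft, hright⟩
  · simpa [neg_add_eq_sub] using hmor.sub_mem_of_hasLineDerivAt hous hx (hD w) (hD z) hwz
  · simpa [hleft z, hleft w, neg_add_eq_sub] using
      hmor'.sub_mem_of_hasLineDerivAt hous (hbij.mapsTo hx) (hD' (G w)) (hD' (G z)) hGwz

/-- **Proposition 2.6**. The map `G_x(z) = −Δ_x^z g(x)` is a bijective homogeneous
order-isomorphism of `V`, whose inverse is `G_{g⁻¹, g(x)}`. -/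
theorem G_bijective_homogeneous_orderIsomorphism
    (C : Set V) (u : V) (hous : IsOrderUnitSpace C u) (hsc : StrictlyConvexCone C)
    (g g' : V → V) (hbij : Set.BijOn g (interior C) (interior C))
    (hanti : IsAntihomogeneous C g) (hmor : IsOrderAntimorphism C g)
    (hinv : Set.InvOn g' g (interior C) (interior C))
    (x : V) (hx : x ∈ interior C)
    (G G' : V → V)
    (hG : ∀ z : V, Tendsto (fun t : ℝ => t⁻¹ • (g (x + t • z) - g x))
      (𝓝[≠] (0:ℝ)) (𝓝 (-(G z))))
    (hG' : ∀ w : V, Tendsto (fun t : ℝ => t⁻¹ • (g' (g x + t • w) - g' (g x)))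
      (𝓝[≠] (0:ℝ)) (𝓝 (-(G' w)))) :
    Function.Bijective G ∧
    (∀ l : ℝ, ∀ z : V, G (l • z) = l • G z) ∧
    (∀ w z : V, (z - w ∈ C ↔ G z - G w ∈ C)) ∧
    Function.LeftInverse G' G ∧ Function.RightInverse G' G :=
  G_bijective_homogeneous_orderIsomorphism_general C u hous g g' hbij hanti hmor hinv x hx G G' hG
    hG'
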